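/- For every p in (0,1), the maximum of S_p on [0,1] equals 2^p/(6^p - 3^p), and it is attained exactly at the points x = 1/3 and x = 2/3; moreover S_p is not differentiable at x = 1/3 and at x = 2/3. -/

import Mathlib

/-!
The series satisfies `S p x = T0 x ^ p + 2⁻ᵖ S p (2 x)`. On the orbit `1/3 ↦ 2/3 ↦ 1/3` the
distance `T0` is constantly `1/3`, so `S p (1/3)` is the fixed point
`Smax p = 3⁻ᵖ / (1 - 2⁻ᵖ) = 2 ^ p / (6 ^ p - 3 ^ p)` of this recursion.

The bound `S p ≤ Smax p` is proved in the stronger form `S p x + deficit p (T0 x) ≤ Smax p`.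
The defect `F = Smax p - S p - deficit p ∘ T0` satisfies `2⁻ᵖ F (2 x) ≤ F x`, by a two-point
inequality for the strictly concave `t ↦ t ^ p`; since `F` is bounded below and `2⁻ᵖ < 1`, its
infimum is nonnegative. The inequality is strict when `T0 x < 1/3`, which gives
`S p x < Smax p` unless `T0 x = 1/3` (for `T0 x > 1/3` apply it at `2 x`).

At `1/3`, `S p` has a global maximum, while to its left `Smax p - S p y ≥ 3⁻ᵖ - y ^ p` grows
linearly, so the left slopes stay away from `0`. The point `2/3` follows from the symmetry
`S p (1 - x) = S p x`.
-/

open Real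

noncomputable def T0 (x : ℝ) : ℝ := |x - round x|

noncomputable def S (p x : ℝ) : ℝ := ∑' n : ℕ, (T0 (2 ^ n * x) / 2 ^ n) ^ p

open Filter Topology

theorem StrictConcaveOn.add_lt_add_of_add_eq {s : Set ℝ} {f : ℝ → ℝ}
    (hf : StrictConcaveOn ℝ s f) {a b c d : ℝ} (ha : a ∈ s) (hb : b ∈ s)
    (hac : a < c) (hcd : c ≤ d) (hsum : a + b = c + d) : f a + f b < f c + f d := by
  have hab : 0 < b - a := by linarith
  obtain ⟨l, hl⟩ : ∃ l, l = (b - c) / (b - a) := ⟨_, rfl⟩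
  obtain ⟨m, hm⟩ : ∃ m, m = (c - a) / (b - a) := ⟨_, rfl⟩
  have hl0 : 0 < l := hl ▸ div_pos (by linarith) hab
  have hm0 : 0 < m := hm ▸ div_pos (by linarith) hab
  have hlm : l + m = 1 := by rw [hl, hm]; field_simp; ring
  have hc : l * a + m * b = c := by rw [hl, hm]; field_simp; ring
  have hd : m * a + l * b = d := by linear_combination (a + b) * hlm - hc + hsum
  have hfc := hf.2 ha hb (by linarith) hl0 hm0 hlm
  have hfd := hf.2 ha hb (by linarith) hm0 hl0 (by linarith)
  simp only [smul_eq_mul, hc, hd] at hfc hfd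
  calc f a + f b = (l + m) * (f a + f b) := by rw [hlm, one_mul]
    _ < f c + f d := by linarith

theorem nonneg_of_mul_comp_le {α : Type*} {F : α → ℝ} {g : α → α} {ρ : ℝ}
    (hF : BddBelow (Set.range F)) (hρ0 : 0 ≤ ρ) (hρ1 : ρ < 1)
    (h : ∀ x, ρ * F (g x) ≤ F x) (x : α) : 0 ≤ F x := by
  have : Nonempty α := ⟨x⟩
  have hinf : ∀ y, ⨅ z, F z ≤ F y := ciInf_le hF
  have : ρ * ⨅ z, F z ≤ ⨅ z, F z := le_ciInf fun y =>
    (mul_le_mul_of_nonneg_left (hinf (g y)) hρ0).trans (h y)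
  nlinarith [hinf x]

theorem not_differentiableAt_of_isLocalMax_of_le_sub {f : ℝ → ℝ} {a c : ℝ}
    (hmax : IsLocalMax f a) (hc : 0 < c)
    (hleft : ∀ᶠ y in 𝓝[<] a, c * (a - y) ≤ f a - f y) :
    ¬ DifferentiableAt ℝ f a := by
  intro hf
  have hslope := (hasDerivAt_iff_tendsto_slope_left_right.1
    (hmax.hasDerivAt_eq_zero hf.hasDerivAt ▸ hf.hasDerivAt)).1
  refine hc.not_ge (ge_of_tendsto hslope ?_)
  filter_upwards [hleft, self_mem_nhdsWithin] with y hy hya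
  rw [slope_def_field, le_div_iff_of_neg (sub_neg.2 hya)]
  linarith

lemma T0_nonneg (x : ℝ) : 0 ≤ T0 x := abs_nonneg _

lemma T0_le_half (x : ℝ) : T0 x ≤ 1 / 2 := abs_sub_round x

lemma T0_eq_min_fract (x : ℝ) : T0 x = min (Int.fract x) (1 - Int.fract x) :=
  abs_sub_round_eq_min x

lemma T0_eq_norm (x : ℝ) : T0 x = ‖(x : UnitAddCircle)‖ := UnitAddCircle.norm_eq.symm

lemma T0_intCast_sub (m : ℤ) (x : ℝ) : T0 (m - x) = T0 x := by
  have hm : ((m : ℝ) : UnitAddCircle) = 0 := (AddCircle.coe_eq_zero_iff 1).2 ⟨m, by simp⟩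
  rw [T0_eq_norm, T0_eq_norm, AddCircle.coe_sub, hm, zero_sub, norm_neg]

lemma T0_one_sub (x : ℝ) : T0 (1 - x) = T0 x := by
  simpa using T0_intCast_sub 1 x

lemma T0_of_le_half {x : ℝ} (h0 : 0 ≤ x) (h1 : x ≤ 1 / 2) : T0 x = x := by
  rw [T0_eq_min_fract, Int.fract_eq_self.2 ⟨h0, by linarith⟩, min_eq_left (by linarith)]

lemma T0_two_mul (x : ℝ) : T0 (2 * x) = min (2 * T0 x) (1 - 2 * T0 x) := by
  have h0 := Int.fract_nonneg x
  have h1 := Int.fract_lt_one x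
  have hfract : Int.fract (2 * x) = Int.fract (2 * Int.fract x) := by
    have h2x : 2 * x = 2 * Int.fract x + ((2 * ⌊x⌋ : ℤ) : ℝ) := by
      push_cast; rw [Int.fract]; ring
    rw [h2x, Int.fract_add_intCast]
  rw [T0_eq_min_fract, T0_eq_min_fract, hfract]
  rcases lt_or_ge (Int.fract x) (1 / 2) with h | h
  · rw [Int.fract_eq_self.2 ⟨by linarith, by linarith⟩]
    simp only [min_def]; split_ifs <;> linarith
  · rw [← Int.fract_sub_one, Int.fract_eq_self.2 ⟨by linarith, by linarith⟩]
    simp only [min_def]; split_ifs <;> linarith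

section

variable {p : ℝ}

lemma half_rpow_pos : 0 < (1 / 2 : ℝ) ^ p := by positivity

lemma half_rpow_lt_one (hp : 0 < p) : (1 / 2 : ℝ) ^ p < 1 :=
  rpow_lt_one (by norm_num) (by norm_num) hp

lemma half_rpow_mul_rpow_two_mul {t : ℝ} (ht : 0 ≤ t) :
    (1 / 2 : ℝ) ^ p * (2 * t) ^ p = t ^ p := by
  rw [← mul_rpow (by norm_num) (by positivity)]
  ring_nf

lemma half_rpow_mul_two_thirds_rpow :
    (1 / 2 : ℝ) ^ p * (2 / 3 : ℝ) ^ p = (1 / 3 : ℝ) ^ p := by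
  rw [← half_rpow_mul_rpow_two_mul (by norm_num : (0 : ℝ) ≤ 1 / 3)]
  norm_num

lemma S_summand_nonneg (n : ℕ) (x : ℝ) : 0 ≤ (T0 (2 ^ n * x) / 2 ^ n) ^ p := by
  have := T0_nonneg (2 ^ n * x)
  positivity

lemma S_summand_le (hp : 0 < p) (n : ℕ) (x : ℝ) :
    (T0 (2 ^ n * x) / 2 ^ n) ^ p ≤ ((1 / 2 : ℝ) ^ p) ^ n := by
  rw [rpow_pow_comm (by norm_num)]
  refine rpow_le_rpow (by have := T0_nonneg (2 ^ n * x); positivity) ?_ hp.le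
  rw [div_pow, one_pow]
  gcongr
  linarith [T0_le_half (2 ^ n * x)]

lemma summable_S_summand (hp : 0 < p) (x : ℝ) :
    Summable fun n : ℕ => (T0 (2 ^ n * x) / 2 ^ n) ^ p :=
  .of_nonneg_of_le (S_summand_nonneg · x) (S_summand_le hp · x)
    (summable_geometric_of_lt_one half_rpow_pos.le (half_rpow_lt_one hp))

lemma S_le_inv_one_sub (hp : 0 < p) (x : ℝ) : S p x ≤ (1 - (1 / 2 : ℝ) ^ p)⁻¹ := by
  rw [← tsum_geometric_of_lt_one half_rpow_pos.le (half_rpow_lt_one hp)]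
  exact (summable_S_summand hp x).tsum_le_tsum (S_summand_le hp · x)
    (summable_geometric_of_lt_one half_rpow_pos.le (half_rpow_lt_one hp))

lemma S_eq_add (hp : 0 < p) (x : ℝ) : S p x = T0 x ^ p + (1 / 2 : ℝ) ^ p * S p (2 * x) := by
  rw [S, (summable_S_summand hp x).tsum_eq_zero_add, S, ← tsum_mul_left]
  congr 1
  · simp
  · refine tsum_congr fun n => ?_
    rw [← mul_rpow (by norm_num) (by have := T0_nonneg (2 ^ n * (2 * x)); positivity),
      pow_succ', mul_assoc, mul_left_comm 2 (2 ^ n) x]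
    congr 1
    ring

lemma S_one_sub (x : ℝ) : S p (1 - x) = S p x := by
  refine tsum_congr fun n => ?_
  have h : (2 : ℝ) ^ n * (1 - x) = ((2 ^ n : ℤ) : ℝ) - 2 ^ n * x := by push_cast; ring
  rw [h, T0_intCast_sub]

noncomputable def Smax (p : ℝ) : ℝ := (1 / 3 : ℝ) ^ p / (1 - (1 / 2 : ℝ) ^ p)

lemma Smax_eq_add (hp : 0 < p) : Smax p = (1 / 3 : ℝ) ^ p + (1 / 2 : ℝ) ^ p * Smax p := by
  have : 1 - (1 / 2 : ℝ) ^ p ≠ 0 := (sub_pos.2 (half_rpow_lt_one hp)).ne'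
  rw [Smax]
  field_simp
  ring

lemma S_third (hp : 0 < p) : S p (1 / 3) = Smax p := by
  have h := S_eq_add hp (1 / 3)
  rw [show (2 : ℝ) * (1 / 3) = 1 - 1 / 3 by norm_num, S_one_sub,
    T0_of_le_half (by norm_num) (by norm_num)] at h
  have := half_rpow_lt_one hp
  rw [Smax, eq_div_iff (by linarith)]
  linarith

lemma Smax_eq (hp : 0 < p) : Smax p = 2 ^ p / (6 ^ p - 3 ^ p) := by
  have h6 : (6 : ℝ) ^ p = 2 ^ p * 3 ^ p := by
    rw [← mul_rpow (by norm_num) (by norm_num)]; norm_num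
  have h2 : (1 : ℝ) < 2 ^ p := one_lt_rpow (by norm_num) hp
  have h3 : (0 : ℝ) < 3 ^ p := by positivity
  rw [Smax, div_rpow zero_le_one (by norm_num), div_rpow zero_le_one (by norm_num), one_rpow, h6]
  field_simp

lemma Smax_sub_S_eq (hp : 0 < p) (x : ℝ) :
    Smax p - S p x = (1 / 3 : ℝ) ^ p - T0 x ^ p + (1 / 2 : ℝ) ^ p * (Smax p - S p (2 * x)) := by
  linear_combination Smax_eq_add hp - S_eq_add hp x

-- Forced by asking `deficit_le_step` to be an equality for `t ∈ [1/3, 1/2]`, where the tent map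
-- sends `t` to `1 - 2 t ∈ [0, 1/3]`.
noncomputable def deficit (p t : ℝ) : ℝ := max 0 ((1 - t) ^ p - (2 / 3 : ℝ) ^ p)

lemma deficit_nonneg (t : ℝ) : 0 ≤ deficit p t := le_max_left _ _

lemma deficit_le_one (hp : 0 < p) {t : ℝ} (ht0 : 0 ≤ t) (ht1 : t ≤ 1) :
    deficit p t ≤ 1 := by
  have h1 : (1 - t) ^ p ≤ 1 := rpow_le_one (by linarith) (by linarith) hp.le
  have h2 : (0 : ℝ) < (2 / 3) ^ p := by positivity
  exact max_le zero_le_one (by linarith)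

lemma deficit_of_third_le (hp : 0 < p) {t : ℝ} (ht : 1 / 3 ≤ t) (ht1 : t ≤ 1) :
    deficit p t = 0 :=
  max_eq_left (sub_nonpos.2 (rpow_le_rpow (by linarith) (by linarith) hp.le))

lemma deficit_of_le_third (hp : 0 < p) {t : ℝ} (ht : t ≤ 1 / 3) :
    deficit p t = (1 - t) ^ p - (2 / 3 : ℝ) ^ p :=
  max_eq_right (sub_nonneg.2 (rpow_le_rpow (by norm_num) (by linarith) hp.le))

lemma deficit_lt_step (hp0 : 0 < p) (hp1 : p < 1) {t : ℝ} (ht0 : 0 ≤ t) (ht : t < 1 / 3) :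
    deficit p t <
      (1 / 3 : ℝ) ^ p - t ^ p + (1 / 2 : ℝ) ^ p * deficit p (min (2 * t) (1 - 2 * t)) := by
  have hconc := strictConcaveOn_rpow hp0 hp1
  rw [deficit_of_le_third hp0 ht.le]
  rcases le_or_gt t (1 / 6) with h6 | h6
  · -- enlarge `1 - t` to `7/6 - 2t` so that both pairs have the same sum
    have hB : (1 - t) ^ p ≤ (7 / 6 - 2 * t) ^ p :=
      rpow_le_rpow (by linarith) (by linarith) hp0.le
    have hkey := hconc.add_lt_add_of_add_eq (a := t) (b := 7 / 6 - 2 * t) (c := 1 / 2 - t)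
      (d := 2 / 3) ht0 (Set.mem_Ici.2 (by linarith)) (by linarith) (by linarith) (by ring)
    rw [min_eq_left (by linarith), deficit_of_le_third hp0 (by linarith), mul_sub,
      show (1 : ℝ) - 2 * t = 2 * (1 / 2 - t) by ring, half_rpow_mul_rpow_two_mul (by linarith),
      half_rpow_mul_two_thirds_rpow]
    norm_num at hkey ⊢
    linarith
  · have hkey := hconc.add_lt_add_of_add_eq (a := t) (b := 1 - t) (c := 1 / 3) (d := 2 / 3)
      ht0 (Set.mem_Ici.2 (by linarith)) ht (by norm_num) (by ring)
    rw [deficit_of_third_le hp0 (le_min (by linarith) (by linarith))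
      ((min_le_left _ _).trans (by linarith))]
    linarith

lemma deficit_le_step (hp0 : 0 < p) (hp1 : p < 1) {t : ℝ} (ht0 : 0 ≤ t) (ht : t ≤ 1 / 2) :
    deficit p t ≤
      (1 / 3 : ℝ) ^ p - t ^ p + (1 / 2 : ℝ) ^ p * deficit p (min (2 * t) (1 - 2 * t)) := by
  rcases lt_or_ge t (1 / 3) with h | h
  · exact (deficit_lt_step hp0 hp1 ht0 h).le
  · rw [deficit_of_third_le hp0 h (by linarith), min_eq_right (by linarith),
      deficit_of_le_third hp0 (by linarith), sub_sub_cancel, mul_sub,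
      half_rpow_mul_rpow_two_mul ht0, half_rpow_mul_two_thirds_rpow]
    linarith

lemma S_add_deficit_le (hp0 : 0 < p) (hp1 : p < 1) (x : ℝ) :
    S p x + deficit p (T0 x) ≤ Smax p := by
  have hbdd : BddBelow (Set.range fun y => Smax p - S p y - deficit p (T0 y)) := by
    refine ⟨Smax p - (1 - (1 / 2 : ℝ) ^ p)⁻¹ - 1, ?_⟩
    rintro _ ⟨y, rfl⟩
    have := S_le_inv_one_sub hp0 y
    have := deficit_le_one hp0 (T0_nonneg y) ((T0_le_half y).trans (by norm_num))
    dsimp only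
    linarith
  have hstep (y : ℝ) : (1 / 2 : ℝ) ^ p * (Smax p - S p (2 * y) - deficit p (T0 (2 * y))) ≤
      Smax p - S p y - deficit p (T0 y) := by
    have := deficit_le_step hp0 hp1 (T0_nonneg y) (T0_le_half y)
    rw [← T0_two_mul] at this
    linarith [Smax_sub_S_eq hp0 y]
  linarith [nonneg_of_mul_comp_le hbdd half_rpow_pos.le (half_rpow_lt_one hp0) hstep x]

lemma S_add_deficit_lt (hp0 : 0 < p) (hp1 : p < 1) {x : ℝ} (hx : T0 x < 1 / 3) :
    S p x + deficit p (T0 x) < Smax p := by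
  have := deficit_lt_step hp0 hp1 (T0_nonneg x) hx
  rw [← T0_two_mul] at this
  have := mul_le_mul_of_nonneg_left
    (le_sub_iff_add_le.2 (S_add_deficit_le hp0 hp1 (2 * x))) (half_rpow_pos (p := p)).le
  linarith [Smax_sub_S_eq hp0 x]

lemma S_le_Smax (hp0 : 0 < p) (hp1 : p < 1) (x : ℝ) : S p x ≤ Smax p :=
  le_of_add_le_of_nonneg_left (S_add_deficit_le hp0 hp1 x) (deficit_nonneg _)

lemma S_lt_Smax (hp0 : 0 < p) (hp1 : p < 1) {x : ℝ} (hx : T0 x ≠ 1 / 3) : S p x < Smax p := by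
  rcases hx.lt_or_gt with hlt | hgt
  · exact lt_of_add_lt_of_nonneg_left (S_add_deficit_lt hp0 hp1 hlt) (deficit_nonneg _)
  · have h2x : T0 (2 * x) = 1 - 2 * T0 x := by
      rw [T0_two_mul, min_eq_right (by linarith)]
    have hlt2 := S_add_deficit_lt hp0 hp1 (x := 2 * x) (by linarith [T0_le_half x])
    rw [h2x, deficit_of_le_third hp0 (by linarith), sub_sub_cancel] at hlt2
    have := mul_lt_mul_of_pos_left (lt_sub_iff_add_lt'.2 hlt2) (half_rpow_pos (p := p))
    rw [mul_sub, half_rpow_mul_rpow_two_mul (T0_nonneg x),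
      half_rpow_mul_two_thirds_rpow] at this
    linarith [Smax_sub_S_eq hp0 x]

lemma rpow_le_tangent_at_third (hp0 : 0 < p) (hp1 : p < 1) {t : ℝ} (ht : 0 ≤ t) :
    t ^ p ≤ (1 / 3 : ℝ) ^ p * (1 + p * (3 * t - 1)) := by
  have h := rpow_one_add_le_one_add_mul_self (s := 3 * t - 1) (by linarith) hp0.le hp1.le
  rw [add_sub_cancel] at h
  calc t ^ p = (1 / 3 : ℝ) ^ p * (3 * t) ^ p := by
        rw [← mul_rpow (by norm_num) (by linarith)]; ring_nf
    _ ≤ _ := mul_le_mul_of_nonneg_left h (by positivity)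

lemma not_differentiableAt_S_third (hp0 : 0 < p) (hp1 : p < 1) :
    ¬ DifferentiableAt ℝ (S p) (1 / 3) := by
  refine not_differentiableAt_of_isLocalMax_of_le_sub (c := 3 * p * (1 / 3 : ℝ) ^ p)
    (.of_forall fun y => S_third hp0 ▸ S_le_Smax hp0 hp1 y) (by positivity) ?_
  filter_upwards [Ioo_mem_nhdsLT (show (0 : ℝ) < 1 / 3 by norm_num)] with y ⟨hy0, hy1⟩
  have hgap := Smax_sub_S_eq hp0 y
  rw [T0_of_le_half hy0.le (by linarith)] at hgap
  have := rpow_le_tangent_at_third hp0 hp1 hy0.le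
  have := S_le_Smax hp0 hp1 (2 * y)
  have := mul_nonneg (half_rpow_pos (p := p)).le (sub_nonneg.2 this)
  rw [S_third hp0]
  linarith

lemma not_differentiableAt_S_two_thirds (hp0 : 0 < p) (hp1 : p < 1) :
    ¬ DifferentiableAt ℝ (S p) (2 / 3) := by
  intro h
  have hsymm : S p ∘ (fun x => 1 - x) = S p := funext S_one_sub
  rw [show (2 / 3 : ℝ) = 1 - 1 / 3 by norm_num] at h
  exact not_differentiableAt_S_third hp0 hp1
    (hsymm ▸ h.comp (1 / 3 : ℝ) (differentiableAt_id.const_sub 1))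

lemma eq_third_or_eq_two_thirds_of_T0_eq {x : ℝ} (hx : x ∈ Set.Icc (0 : ℝ) 1)
    (h : T0 x = 1 / 3) :
    x = 1 / 3 ∨ x = 2 / 3 := by
  rcases le_or_gt x (1 / 2) with hx2 | hx2
  · exact .inl (T0_of_le_half hx.1 hx2 ▸ h)
  · rw [← T0_one_sub, T0_of_le_half (by linarith [hx.2]) (by linarith)] at h
    exact .inr (by linarith)

end

theorem stmt_19 (p : ℝ) (hp0 : 0 < p) (hp1 : p < 1) :
    (∀ x ∈ Set.Icc (0 : ℝ) 1, S p x ≤ 2 ^ p / (6 ^ p - 3 ^ p)) ∧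
    (∀ x ∈ Set.Icc (0 : ℝ) 1,
      (S p x = 2 ^ p / (6 ^ p - 3 ^ p) ↔ x = 1 / 3 ∨ x = 2 / 3)) ∧
    ¬ DifferentiableAt ℝ (S p) (1 / 3) ∧ ¬ DifferentiableAt ℝ (S p) (2 / 3) := by
  rw [← Smax_eq hp0]
  refine ⟨fun x _ => S_le_Smax hp0 hp1 x, fun x hx => ⟨fun h => ?_, ?_⟩,
    not_differentiableAt_S_third hp0 hp1, not_differentiableAt_S_two_thirds hp0 hp1⟩
  · by_contra hne
    exact (S_lt_Smax hp0 hp1 fun hT => hne (eq_third_or_eq_two_thirds_of_T0_eq hx hT)).ne h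
  · rintro (rfl | rfl)
    · exact S_third hp0
    · rw [show (2 / 3 : ℝ) = 1 - 1 / 3 by norm_num, S_one_sub, S_third hp0]
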